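/- Let Ω ⊆ ℝ^N be a nonempty open set and let E ⊆ ℝ^N be a measurable set such that 𝒥^λ_{s₀}(E;Ω) < ∞ for some s₀ ∈ (0,1). Then lim_{s→0⁺} s·𝒥^λ_s(E;Ω) = 0. -/

import Mathlib

/-!
For `0 < s ≤ s₀` the kernel `r ^ (-(N + s))` is bounded by `r ^ (-(N + s₀))` where `r ≤ 1` and
by `1` where `r ≥ 1`. Since `λ` is a finite measure, this gives
`𝒥^λ_s(E;Ω) ≤ 𝒥^λ_{s₀}(E;Ω) + 3 λ(ℝ^N)²`, a bound uniform in `s ∈ (0, s₀]`, so `s 𝒥^λ_s(E;Ω) → 0`.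
-/

open MeasureTheory Real Set Filter

/-- The measure λ with density $(2π)^{-N/2} e^{-|x|^2/4}$ w.r.t. Lebesgue measure. -/
noncomputable def lambdaMeasure (N : ℕ) : Measure (EuclideanSpace ℝ (Fin N)) :=
  volume.withDensity fun x => ENNReal.ofReal ((2 * π) ^ (-(N : ℝ) / 2) * Real.exp (-‖x‖ ^ 2 / 4))

/-- The interaction $L^λ_s(A,B) = ∫_A ∫_B |x-y|^{-(N+s)} dλ(y) dλ(x)$. -/
noncomputable def Llambda (N : ℕ) (s : ℝ) (A B : Set (EuclideanSpace ℝ (Fin N))) : ENNReal :=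
  ∫⁻ x in A, ∫⁻ y in B, ENNReal.ofReal (‖x - y‖ ^ (-((N : ℝ) + s)))
    ∂(lambdaMeasure N) ∂(lambdaMeasure N)

/-- The Gaussian fractional $s$-perimeter of De Rosa–La Manna. -/
noncomputable def Jlambda (N : ℕ) (s : ℝ) (E Ω : Set (EuclideanSpace ℝ (Fin N))) : ENNReal :=
  Llambda N s (E ∩ Ω) (Eᶜ ∩ Ω) + Llambda N s (E ∩ Ω) (Eᶜ ∩ Ωᶜ) + Llambda N s (E ∩ Ωᶜ) (Eᶜ ∩ Ω)

open scoped ENNReal Topology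

lemma integrable_exp_neg_mul_sq_norm {V : Type*} [NormedAddCommGroup V] [InnerProductSpace ℝ V]
    [FiniteDimensional ℝ V] [MeasurableSpace V] [BorelSpace V] {b : ℝ} (hb : 0 < b) :
    Integrable (fun x : V => Real.exp (-b * ‖x‖ ^ 2)) := by
  have h := (GaussianFourier.integrable_cexp_neg_mul_sq_norm_add (V := V) (b := b)
    (by simpa using hb) 0 0).norm
  refine h.congr (.of_forall fun x => ?_)
  simp only [Complex.norm_exp]
  norm_cast
  simp

instance (N : ℕ) : IsFiniteMeasure (lambdaMeasure N) := by
  refine isFiniteMeasure_withDensity_ofReal (Integrable.hasFiniteIntegral ?_)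
  refine ((integrable_exp_neg_mul_sq_norm (V := EuclideanSpace ℝ (Fin N))
    (b := 1 / 4) (by norm_num)).const_mul ((2 * π) ^ (-(N : ℝ) / 2))).congr (.of_forall fun x => ?_)
  ring_nf

lemma ofReal_rpow_neg_le_add_one {a b r : ℝ} (ha : 0 < a) (hab : a ≤ b) (hr : 0 ≤ r) :
    ENNReal.ofReal (r ^ (-a)) ≤ ENNReal.ofReal (r ^ (-b)) + 1 := by
  rcases hr.eq_or_lt with rfl | hr
  · simp [Real.zero_rpow (neg_ne_zero.2 ha.ne')]
  rcases le_or_gt r 1 with hr1 | hr1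
  · exact (ENNReal.ofReal_le_ofReal
      (Real.rpow_le_rpow_of_exponent_ge hr hr1 (neg_le_neg hab))).trans le_self_add
  · refine le_add_left (ENNReal.ofReal_le_one.2 ?_)
    exact Real.rpow_le_one_of_one_le_of_nonpos hr1.le (neg_nonpos.2 ha.le)

lemma setLIntegral_setLIntegral_le_add_one {α : Type*} [MeasurableSpace α] (μ : Measure α)
    {f g : α → α → ℝ≥0∞} (hfg : ∀ x y, f x y ≤ g x y + 1) (A B : Set α) :
    ∫⁻ x in A, ∫⁻ y in B, f x y ∂μ ∂μ ≤ (∫⁻ x in A, ∫⁻ y in B, g x y ∂μ ∂μ) + μ univ * μ univ := by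
  have inner (x : α) : ∫⁻ y in B, f x y ∂μ ≤ (∫⁻ y in B, g x y ∂μ) + μ univ :=
    calc ∫⁻ y in B, f x y ∂μ ≤ ∫⁻ y in B, (g x y + 1) ∂μ := lintegral_mono (hfg x)
      _ = (∫⁻ y in B, g x y ∂μ) + μ B := by
        rw [lintegral_add_right _ measurable_const, setLIntegral_one]
      _ ≤ _ := by gcongr; exact subset_univ B
  calc ∫⁻ x in A, ∫⁻ y in B, f x y ∂μ ∂μ
      ≤ ∫⁻ x in A, ((∫⁻ y in B, g x y ∂μ) + μ univ) ∂μ := lintegral_mono inner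
    _ = (∫⁻ x in A, ∫⁻ y in B, g x y ∂μ ∂μ) + μ univ * μ A := by
        rw [lintegral_add_right _ measurable_const, setLIntegral_const]
    _ ≤ _ := by gcongr; exact subset_univ A

lemma Llambda_le_add (N : ℕ) {s s₀ : ℝ} (hs : 0 < s) (hss₀ : s ≤ s₀)
    (A B : Set (EuclideanSpace ℝ (Fin N))) :
    Llambda N s A B ≤ Llambda N s₀ A B + lambdaMeasure N univ * lambdaMeasure N univ :=
  setLIntegral_setLIntegral_le_add_one _
    (fun _ _ => ofReal_rpow_neg_le_add_one (by positivity) (by linarith) (norm_nonneg _)) A B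

lemma Jlambda_le_add (N : ℕ) {s s₀ : ℝ} (hs : 0 < s) (hss₀ : s ≤ s₀)
    (E Ω : Set (EuclideanSpace ℝ (Fin N))) :
    Jlambda N s E Ω ≤ Jlambda N s₀ E Ω + 3 * (lambdaMeasure N univ * lambdaMeasure N univ) := by
  have hL (A B : Set (EuclideanSpace ℝ (Fin N))) := Llambda_le_add N hs hss₀ A B
  calc Jlambda N s E Ω ≤ _ := add_le_add (add_le_add (hL _ _) (hL _ _)) (hL _ _)
    _ = _ := by unfold Jlambda; ring

lemma tendsto_ofReal_mul_nhdsGT_zero_of_eventually_le {f : ℝ → ℝ≥0∞} {C : ℝ≥0∞} (hC : C ≠ ⊤)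
    (hf : ∀ᶠ s in 𝓝[>] 0, f s ≤ C) :
    Tendsto (fun s => ENNReal.ofReal s * f s) (𝓝[>] 0) (𝓝 0) := by
  have hlim : Tendsto (fun s => ENNReal.ofReal s * C) (𝓝[>] 0) (𝓝 0) := by
    have h := ENNReal.Tendsto.mul_const
      (ENNReal.continuous_ofReal.tendsto 0 |>.mono_left (nhdsWithin_le_nhds (s := Ioi 0)))
      (Or.inr hC)
    simpa using h
  refine tendsto_of_tendsto_of_tendsto_of_le_of_le' tendsto_const_nhds hlim
    (.of_forall fun _ => zero_le) ?_
  filter_upwards [hf] with s hs using mul_le_mul_right hs _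

theorem stmt_13_general (N : ℕ) (Ω E : Set (EuclideanSpace ℝ (Fin N)))
    (s₀ : ℝ) (hs₀ : s₀ ∈ Set.Ioo (0 : ℝ) 1) (hfin : Jlambda N s₀ E Ω < ⊤) :
    Filter.Tendsto (fun s : ℝ => ENNReal.ofReal s * Jlambda N s E Ω)
      (nhdsWithin 0 (Set.Ioi 0)) (nhds 0) := by
  refine tendsto_ofReal_mul_nhdsGT_zero_of_eventually_le
    (C := Jlambda N s₀ E Ω + 3 * (lambdaMeasure N univ * lambdaMeasure N univ))
    (by finiteness) ?_
  filter_upwards [self_mem_nhdsWithin, mem_nhdsWithin_of_mem_nhds (Iio_mem_nhds hs₀.1)]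
    with s hs hss₀
  exact Jlambda_le_add N hs hss₀.le E Ω

/-- if $𝒥^λ_{s_0}(E;Ω)<∞$ for some $s_0∈(0,1)$ then
$\lim_{s→0^+} s 𝒥^λ_s(E;Ω)=0$. -/
theorem stmt_13 (N : ℕ) (Ω E : Set (EuclideanSpace ℝ (Fin N)))
    (hΩopen : IsOpen Ω) (hΩne : Ω.Nonempty) (hE : MeasurableSet E)
    (s₀ : ℝ) (hs₀ : s₀ ∈ Set.Ioo (0 : ℝ) 1) (hfin : Jlambda N s₀ E Ω < ⊤) :
    Filter.Tendsto (fun s : ℝ => ENNReal.ofReal s * Jlambda N s E Ω)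
      (nhdsWithin 0 (Set.Ioi 0)) (nhds 0) :=
  stmt_13_general N Ω E s₀ hs₀ hfin
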